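/- arXiv:2204.13388 — 10 statements merged into one kernel-verified Lean document; each statement's English description precedes it below -/
import Mathlib

section
/- Let c, tm, qf, qd, ℓe, kU, kF, kNF, kNB, wAc, wBc, wCc be integers satisfying: (i) wAc ≤ (kU + kF)·ℓe; (ii) wBc ≤ (qd − 1)·(kNF + kNB + kF − ℓe); (iii) wCc ≤ (qf − 1)·(c − kNF − kNB − kF); (iv) wAc + wBc + wCc ≥ (kU + kF)·(c − tm); (v) qd ≥ qf; (vi) kNF ≤ kU. Then ℓe·(kU + kF − qd + 1) ≥ (kU + kF)·(c − tm − qd + qf) − c·(qf − 1) − kNB·(qd − qf). -/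
theorem l_fact_min (c tm qf qd ℓe kU kF kNF kNB wAc wBc wCc : ℤ)
    (h1 : wAc ≤ (kU + kF) * ℓe)
    (h2 : wBc ≤ (qd - 1) * (kNF + kNB + kF - ℓe))
    (h3 : wCc ≤ (qf - 1) * (c - kNF - kNB - kF))
    (h4 : wAc + wBc + wCc ≥ (kU + kF) * (c - tm))
    (h5 : qd ≥ qf)
    (h6 : kNF ≤ kU) :
    ℓe * (kU + kF - qd + 1) ≥
      (kU + kF) * (c - tm - qd + qf) - c * (qf - 1) - kNB * (qd - qf) := by
  nlinarith [mul_le_mul_of_nonneg_left h6 (sub_nonneg.2 h5), mul_nonneg (sub_nonneg.2 h5) (sub_nonneg.2 h6)]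
end

section
/- Let ℓe, qd, tb, tm, c, qf, kU, kF, kNF, kNB, wAc, wAb, wBc, wCc be integers satisfying: (i) ℓe > 0; (ii) qd·ℓe ≤ wAc + wAb; (iii) wAb ≤ tb·ℓe; (iv) wAc ≤ (kU + kF)·ℓe; (v) wAc + wBc ≤ (kNF + kF + kNB)·(kU + kF); (vi) wCc ≤ (qf − 1)·(c − kNF − kNB − kF); (vii) wAc + wBc + wCc ≥ (kU + kF)·(c − tm); (viii) kNF ≤ kU; (ix) qd − qf ≥ tb. Then, writing x = kU + kF, we have x ≥ qd − tb and x² − x·(c − tm + qf − 1 − kNB) ≥ −(c − kNB)·(qf − 1). -/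
theorem polynom_if_one (ℓe qd tb tm c qf kU kF kNF kNB wAc wAb wBc wCc : ℤ)
    (h0 : ℓe > 0)
    (h1 : qd * ℓe ≤ wAc + wAb)
    (h2 : wAb ≤ tb * ℓe)
    (h3 : wAc ≤ (kU + kF) * ℓe)
    (h4 : wAc + wBc ≤ (kNF + kF + kNB) * (kU + kF))
    (h5 : wCc ≤ (qf - 1) * (c - kNF - kNB - kF))
    (h6 : wAc + wBc + wCc ≥ (kU + kF) * (c - tm))
    (h7 : kNF ≤ kU)
    (h8 : qd - qf ≥ tb) :
    kU + kF ≥ qd - tb ∧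
      (kU + kF) ^ 2 - (kU + kF) * (c - tm + qf - 1 - kNB) ≥
        -((c - kNB) * (qf - 1)) := by
  have hx : kU + kF ≥ qd - tb := by
    by_contra h
    push_neg at h
    nlinarith [mul_lt_mul_of_pos_right h h0]
  refine ⟨hx, ?_⟩
  nlinarith [mul_nonneg (by linarith : (0:ℤ) ≤ kU - kNF) (by linarith : (0:ℤ) ≤ kU + kF - qf + 1)]
end

section
/- Let n, tb, tm, qf, qd, x be integers and set α = n + qf − tb − tm − 1. Assume: (i) α² − 4·(qf − 1)·(n − tb) ≥ 0; (ii) α·(qd − 1) − (qf − 1)·(n − tb) − (qd − 1)² > 0; (iii) α·(qd − 1 − tb) − (qf − 1)·(n − tb) − (qd − 1 − tb)² ≥ 0; (iv) x ≥ qd − tb; and (v) x² − α·x + (qf − 1)·(n − tb) ≥ 0. Then x ≥ qd. -/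
theorem enough_if_one_core (n tb tm qf qd x : ℤ)
    (h1 : (n + qf - tb - tm - 1) ^ 2 - 4 * (qf - 1) * (n - tb) ≥ 0)
    (h2 : (n + qf - tb - tm - 1) * (qd - 1) - (qf - 1) * (n - tb)
            - (qd - 1) ^ 2 > 0)
    (h3 : (n + qf - tb - tm - 1) * (qd - 1 - tb) - (qf - 1) * (n - tb)
            - (qd - 1 - tb) ^ 2 ≥ 0)
    (h4 : x ≥ qd - tb)
    (h5 : x ^ 2 - (n + qf - tb - tm - 1) * x + (qf - 1) * (n - tb) ≥ 0) :
    x ≥ qd := by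
  by_contra h
  push_neg at h
  have hb : x ≤ qd - 1 := by omega
  have ha : x - (qd - 1 - tb) ≥ 1 := by omega
  nlinarith [mul_nonneg h3 (by omega : (0:ℤ) ≤ qd - 1 - x),
    mul_pos h2 (by omega : (0:ℤ) < x - (qd - 1 - tb)),
    mul_nonneg (mul_nonneg (by omega : (0:ℤ) ≤ x - (qd - 1 - tb)) (by omega : (0:ℤ) ≤ qd - 1 - x)) (by omega : (0:ℤ) ≤ tb),
    mul_nonneg h5 (by omega : (0:ℤ) ≤ tb)]
end

section
/- Let ℓe, x, c, qd, qf, tm be integers satisfying: (i) qd ≤ x; (ii) x ≤ c; (iii) ℓe·(x − qd + 1) ≥ x·(c − tm − qd + qf) − c·(qf − 1); and (iv) (c − tm + qf − 1)·(qd − 1) − (qf − 1)·c − (qd − 1)² > 0. Then ℓe·(c − qd + 1) ≥ c·(c − tm − qd + 1). -/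
theorem ell_if_enough_core (ℓe x c qd qf tm : ℤ)
    (h1 : qd ≤ x)
    (h2 : x ≤ c)
    (h3 : ℓe * (x - qd + 1) ≥ x * (c - tm - qd + qf) - c * (qf - 1))
    (h4 : (c - tm + qf - 1) * (qd - 1) - (qf - 1) * c - (qd - 1) ^ 2 > 0) :
    ℓe * (c - qd + 1) ≥ c * (c - tm - qd + 1) := by
  have hx : 0 < x - qd + 1 := by linarith
  have hc : 0 < c - qd + 1 := by linarith
  have key : (x * (c - tm - qd + qf) - c * (qf - 1)) * (c - qd + 1)
      ≥ c * (c - tm - qd + 1) * (x - qd + 1) := by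
    nlinarith [mul_nonneg (sub_nonneg.mpr h2) h4.le]
  have step : ℓe * (c - qd + 1) * (x - qd + 1) ≥ c * (c - tm - qd + 1) * (x - qd + 1) := by
    nlinarith [mul_le_mul_of_nonneg_right h3 hc.le]
  exact le_of_mul_le_mul_right step hx
end

section
/- Let n, tb, tm be natural numbers such that, as real numbers, n > 3·tb + 2·tm + 2·√(tb·tm). Set c = n − tb. Then (as integers) c − tm − ⌊(n − tb)/2⌋ > 0 and c − tm ≥ ⌊(c·tb)/(c − tm − ⌊(n − tb)/2⌋)⌋ + 1. -/
theorem echo_sufficient (n tb tm : ℕ)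
    (h : (n : ℝ) > 3 * tb + 2 * tm + 2 * Real.sqrt (tb * tm)) :
    0 < ((n : ℤ) - tb) - tm - ((n : ℤ) - tb) / 2 ∧
      ((n : ℤ) - tb) - tm ≥
        (((n : ℤ) - tb) * tb) / (((n : ℤ) - tb) - tm - ((n : ℤ) - tb) / 2) + 1 := by
  set c : ℤ := (n : ℤ) - tb with hc
  set s : ℝ := Real.sqrt (tb * tm) with hsdef
  have hs : 0 ≤ s := Real.sqrt_nonneg _
  have hs2 : s ^ 2 = (tb : ℝ) * tm := by
    rw [hsdef, sq]
    exact Real.mul_self_sqrt (by positivity)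
  have hcr : (c : ℝ) > 2 * tb + 2 * tm + 2 * s := by
    push_cast [hc]; linarith
  -- quadratic inequality over the reals
  have hq : (c : ℝ) * c - (3 * tm + 2 * tb) * c + 2 * (tm : ℝ) ^ 2 > 0 := by
    nlinarith [mul_pos (by linarith : (0:ℝ) < (c : ℝ) - (2*tb + 2*tm + 2*s))
        (by linarith [(Nat.cast_nonneg tb : (0:ℝ) ≤ tb), (Nat.cast_nonneg tm : (0:ℝ) ≤ tm)] :
          (0:ℝ) < (c : ℝ) + (2*tb + 2*tm + 2*s) - (3*tm + 2*tb)),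
      mul_nonneg ((Nat.cast_nonneg tb : (0:ℝ) ≤ tb)) hs, mul_nonneg ((Nat.cast_nonneg tm : (0:ℝ) ≤ tm)) hs,
      mul_nonneg ((Nat.cast_nonneg tb : (0:ℝ) ≤ tb)) ((Nat.cast_nonneg tm : (0:ℝ) ≤ tm))]
  -- transfer to integers
  have hkey : 2 * c * tb < (c - tm) * (c - 2 * tm) := by
    have : ((2 * c * tb : ℤ) : ℝ) < (((c - tm) * (c - 2 * tm) : ℤ) : ℝ) := by
      push_cast; nlinarith
    exact_mod_cast this
  have hcge : c > 2 * (tb : ℤ) + 2 * tm := by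
    have : ((2 * (tb : ℤ) + 2 * tm : ℤ) : ℝ) < (c : ℝ) := by push_cast; linarith
    exact_mod_cast this
  set d : ℤ := c - tm - c / 2 with hd
  have hdpos : 0 < d := by omega
  have h2d : c - 2 * tm ≤ 2 * d := by omega
  refine ⟨hdpos, ?_⟩
  have hctm : 0 ≤ c - (tm : ℤ) := by omega
  have hlt : c * tb < (c - tm) * d := by
    nlinarith [mul_le_mul_of_nonneg_left h2d hctm]
  have := (Int.ediv_lt_iff_lt_mul hdpos).mpr (by linarith : c * tb < (c - tm) * d)
  omega
end

section
/- Let n, tb, tm, c be natural numbers such that n − tb ≤ c ≤ n and, as real numbers, n > 3·tb + 2·tm + 2·√(tb·tm). Then c − ⌊(n + tb)/2⌋ > 0, c − 2·tm − tb > 0, and ⌈c·(1 − tm/(c − ⌊(n + tb)/2⌋))⌉ ≥ ⌊(c·tb)/(c − 2·tm − tb)⌋ + 1, where ⌈·⌉ and ⌊·⌋ denote the ceiling and floor of real numbers. -/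
theorem ready_sufficient (n tb tm c : ℕ)
    (h1 : n - tb ≤ c) (h2 : c ≤ n)
    (h : (n : ℝ) > 3 * tb + 2 * tm + 2 * Real.sqrt (tb * tm)) :
    0 < (c : ℤ) - ((n : ℤ) + tb) / 2 ∧
      0 < (c : ℤ) - 2 * tm - tb ∧
      ⌈(c : ℝ) * (1 - (tm : ℝ) / ((c : ℝ) - (((n + tb) / 2 : ℕ) : ℝ)))⌉ ≥
        ⌊((c : ℝ) * tb) / ((c : ℝ) - 2 * tm - tb)⌋ + 1 := by
  set s : ℝ := Real.sqrt (tb * tm) with hs_def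
  have hs0 : 0 ≤ s := Real.sqrt_nonneg _
  have hs2 : s * s = (tb : ℝ) * tm := Real.mul_self_sqrt (by positivity)
  have htb0 : (0:ℝ) ≤ (tb:ℝ) := Nat.cast_nonneg _
  have htm0 : (0:ℝ) ≤ (tm:ℝ) := Nat.cast_nonneg _
  -- n > 3tb + 2tm in ℕ
  have hnR : (3*tb + 2*tm : ℝ) < n := by push_cast; linarith
  have hnN : 3*tb + 2*tm < n := by exact_mod_cast hnR
  refine ⟨by omega, by omega, ?_⟩
  -- real versions
  have hcR : (n:ℝ) - tb ≤ c := by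
    have : n ≤ c + tb := by omega
    have := (Nat.cast_le (α := ℝ)).2 this
    push_cast at this
    linarith
  have hF : (((n + tb) / 2 : ℕ) : ℝ) ≤ ((n:ℝ) + tb) / 2 := by
    have := Nat.cast_div_le (m := n + tb) (n := 2) (α := ℝ)
    push_cast at this
    convert this using 2 <;> norm_num
  set F : ℝ := (((n + tb) / 2 : ℕ) : ℝ) with hF_def
  set A : ℝ := (c:ℝ) - F with hA_def
  set B : ℝ := (c:ℝ) - 2*tm - tb with hB_def
  have ha : s < A - tm := by
    have : ((n:ℝ) - 3*tb - 2*tm)/2 > s := by linarith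
    have hA1 : A ≥ (c:ℝ) - ((n:ℝ)+tb)/2 := by simp [hA_def]; linarith
    linarith
  have hb : 2*s < B - tb := by
    have : B - tb ≥ (n:ℝ) - 2*tb - 2*tm - tb := by simp [hB_def]; linarith
    linarith
  have hA : 0 < A := by linarith
  have hB : 0 < B := by linarith
  have hc0 : (0:ℝ) < c := by
    have : (n:ℝ) - tb > 2*tb + 2*tm + 2*s := by linarith
    linarith
  have hab : s * (2*s) < (A - tm) * (B - tb) :=
    mul_lt_mul'' ha hb hs0 (by linarith)
  have hpos : 0 < (A - tm) * (B - tb) - (tb:ℝ) * tm := by nlinarith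
  have key : (c:ℝ) * tb * A < (c * (A - tm)) * B := by
    nlinarith [mul_pos hc0 hpos]
  have hreal : ((c:ℝ) * tb) / B < (c:ℝ) * (1 - (tm:ℝ) / A) := by
    have h2 : (c:ℝ) * (1 - (tm:ℝ) / A) = (c * (A - tm)) / A := by
      field_simp
    rw [h2, div_lt_div_iff₀ hB hA]
    linarith [key]
  set x : ℝ := (c:ℝ) * (1 - (tm:ℝ) / A) with hx_def
  set y : ℝ := ((c:ℝ) * tb) / B with hy_def
  have hlt : (⌊y⌋ : ℝ) < (⌈x⌉ : ℝ) := by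
    calc (⌊y⌋ : ℝ) ≤ y := Int.floor_le y
    _ < x := hreal
    _ ≤ ⌈x⌉ := Int.le_ceil x
  have : ⌊y⌋ < ⌈x⌉ := by exact_mod_cast hlt
  omega
end

section
/- Let n, tb, tm, c be natural numbers with tb + tm ≥ 1, n − tb ≤ c ≤ n, and, as real numbers, n > 5·tb + 12·tm + 2·tb·tm/(tb + 2·tm). Then c − tb − 4·tm > 0 and c − tm ≥ ⌊(c·⌊(n + tb)/2⌋)/(c − tb − 4·tm)⌋ + 1. -/
theorem witness_sufficient (n tb tm c : ℕ)
    (htbtm : tb + tm ≥ 1)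
    (h1 : n - tb ≤ c) (h2 : c ≤ n)
    (h : (n : ℝ) > 5 * tb + 12 * tm + 2 * tb * tm / (tb + 2 * tm)) :
    0 < (c : ℤ) - tb - 4 * tm ∧
      (c : ℤ) - tm ≥
        ((c : ℤ) * (((n + tb) / 2 : ℕ) : ℤ)) / ((c : ℤ) - tb - 4 * tm) + 1 := by
  have hs : (0:ℝ) < (tb:ℝ) + 2 * tm := by
    have : (1:ℕ) ≤ tb + 2 * tm := by omega
    have := (Nat.one_le_cast (α := ℝ)).2 this
    push_cast at this
    linarith
  have hfrac : (0:ℝ) ≤ 2 * (tb:ℝ) * tm / ((tb:ℝ) + 2 * tm) := by positivity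
  have hnR : ((5 * tb + 12 * tm : ℕ) : ℝ) < (n : ℝ) := by push_cast; linarith
  have hn : 5 * tb + 12 * tm < n := by exact_mod_cast hnR
  have hc1 : n ≤ c + tb := by omega
  have hd : 0 < (c : ℤ) - tb - 4 * tm := by omega
  refine ⟨hd, ?_⟩
  have hq : 2 * ((n + tb) / 2) ≤ n + tb := by omega
  rw [ge_iff_le, Int.add_one_le_iff, Int.ediv_lt_iff_lt_mul hd]
  -- key: c * ((n+tb)/2) < (c - tm) * (c - tb - 4tm)
  have hqZ : 2 * (((n + tb) / 2 : ℕ) : ℤ) ≤ (n : ℤ) + tb := by exact_mod_cast hq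
  have hnZ : 5 * (tb : ℤ) + 12 * tm < n := by exact_mod_cast hn
  have hc1Z : (n : ℤ) ≤ (c : ℤ) + tb := by exact_mod_cast hc1
  have h2Z : (c : ℤ) ≤ n := by exact_mod_cast h2
  have hcq : (0:ℤ) ≤ (c : ℤ) := Int.natCast_nonneg c
  have he : (0:ℤ) ≤ (c : ℤ) - (n - tb) := by linarith
  have hkey : (c : ℤ) * ((n : ℤ) + tb) < 2 * ((c : ℤ) - tm) * ((c : ℤ) - tb - 4 * tm) := by
    nlinarith [mul_nonneg he (show (0:ℤ) ≤ 2 * c + n - 5 * tb - 10 * tm by linarith),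
      sq_nonneg ((n:ℤ) - 5 * tb - 12 * tm), Int.natCast_nonneg tb, Int.natCast_nonneg tm,
      mul_nonneg (Int.natCast_nonneg tb) (Int.natCast_nonneg tm),
      mul_nonneg (Int.natCast_nonneg tm) (Int.natCast_nonneg tm),
      mul_nonneg (show (0:ℤ) ≤ (n:ℤ) - 5*tb - 12*tm - 1 by linarith) (Int.natCast_nonneg tb),
      mul_nonneg (show (0:ℤ) ≤ (n:ℤ) - 5*tb - 12*tm - 1 by linarith) (Int.natCast_nonneg tm)]
  nlinarith [mul_le_mul_of_nonneg_left hqZ hcq]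
end

section
/- Let n, tb, tm be natural numbers with tb + tm ≥ 1 such that, as real numbers, n > 3·tb + 2·tm + 2·√(tb·tm). Then (as integers) (n − tm)·⌊(n + tb)/2⌋ − tb·(n − tb) − ⌊(n + tb)/2⌋² > 0. -/
theorem echo_assumption3 (n tb tm : ℕ) (htbtm : tb + tm ≥ 1)
    (h : (n : ℝ) > 3 * tb + 2 * tm + 2 * Real.sqrt (tb * tm)) :
    ((n : ℤ) - tm) * (((n + tb) / 2 : ℕ) : ℤ) - tb * ((n : ℤ) - tb)
      - (((n + tb) / 2 : ℕ) : ℤ) ^ 2 > 0 := by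
  set q : ℕ := (n + tb) / 2 with hq
  have h1 : 2 * q ≤ n + tb := by omega
  have h2 : n + tb ≤ 2 * q + 1 := by omega
  have key : ((n : ℝ) - tm) * q - tb * ((n : ℝ) - tb) - (q : ℝ) ^ 2 > 0 := by
    set s : ℝ := Real.sqrt (tb * tm) with hs
    have hs0 : 0 ≤ s := Real.sqrt_nonneg _
    have hs2 : s ^ 2 = (tb : ℝ) * tm := Real.sq_sqrt (by positivity)
    have h1' : 2 * (q : ℝ) ≤ (n : ℝ) + tb := by exact_mod_cast h1
    have h2' : (n : ℝ) + tb ≤ 2 * (q : ℝ) + 1 := by exact_mod_cast h2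
    have htbtm' : (1 : ℝ) ≤ (tb : ℝ) + tm := by exact_mod_cast htbtm
    have hq0 : (0 : ℝ) ≤ (q : ℝ) := by positivity
    nlinarith [sq_nonneg ((q : ℝ) - tb - tm - s), sq_nonneg ((q : ℝ) - tb - tm + s),
      sq_nonneg (2 * (q : ℝ) - 3 * tb - tm + 1 - 2 * s),
      mul_nonneg hs0 hq0, mul_nonneg hs0 hs0,
      mul_nonneg (mul_nonneg hs0 hs0) hs0]
  have := key
  push_cast at this ⊢
  exact_mod_cast this
end

section
/- Let n, tb, tm be natural numbers such that, as real numbers, n > 3·tb + 2·tm + 2·√(tb·tm). Then (as integers) (n − tm)·(⌊(n + tb)/2⌋ − tb) − tb·(n − tb) − (⌊(n + tb)/2⌋ − tb)² ≥ 0. -/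
theorem echo_assumption4 (n tb tm : ℕ)
    (h : (n : ℝ) > 3 * tb + 2 * tm + 2 * Real.sqrt (tb * tm)) :
    ((n : ℤ) - tm) * ((((n + tb) / 2 : ℕ) : ℤ) - tb) - tb * ((n : ℤ) - tb)
      - ((((n + tb) / 2 : ℕ) : ℤ) - tb) ^ 2 ≥ 0 := by
  have hs0 : (0:ℝ) ≤ Real.sqrt (tb * tm) := Real.sqrt_nonneg _
  have h1 : n ≥ 3 * tb + 2 * tm + 1 := by
    have : ((3 * tb + 2 * tm : ℕ) : ℝ) < n := by push_cast; linarith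
    exact_mod_cast Nat.cast_lt.mp this
  have h2 : 1 ≤ tb → 1 ≤ tm → n ≥ 3 * tb + 2 * tm + 3 := by
    intro hb hm
    have hs1 : (1:ℝ) ≤ Real.sqrt (tb * tm) := by
      rw [show (1:ℝ) = Real.sqrt 1 by simp]
      apply Real.sqrt_le_sqrt
      have hb' : (1:ℝ) ≤ tb := by exact_mod_cast hb
      have hm' : (1:ℝ) ≤ tm := by exact_mod_cast hm
      nlinarith
    have : ((3 * tb + 2 * tm + 2 : ℕ) : ℝ) < n := by push_cast; linarith
    exact Nat.cast_lt.mp this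
  have hdm := Nat.div_add_mod (n + tb) 2
  have hmod : (n + tb) % 2 = 0 ∨ (n + tb) % 2 = 1 := by omega
  set q := (n + tb) / 2 with hq
  rcases hmod with hr | hr
  · -- even case: X ≥ tb + tm + something, goal X² - X(tb+tm) ≥ 0
    have hX : (q : ℤ) ≥ tb + tm + 1 := by omega
    have h2q : 2 * (q : ℤ) = n + tb := by omega
    nlinarith [hX, h2q]
  · have h2q : 2 * (q : ℤ) + 1 = n + tb := by omega
    rcases Nat.eq_zero_or_pos tb with hb | hb
    · have hX : (q : ℤ) ≥ tm := by omega
      have hb' : (tb : ℤ) = 0 := by exact_mod_cast hb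
      nlinarith [hX]
    rcases Nat.eq_zero_or_pos tm with hm | hm
    · have hX : (q : ℤ) ≥ 2 * tb := by omega
      have hm' : (tm : ℤ) = 0 := by exact_mod_cast hm
      nlinarith [hX]
    · have h3 := h2 hb hm
      have hX : (q : ℤ) ≥ tb + tb + tm + 1 := by omega
      have hb' : (1:ℤ) ≤ tb := by exact_mod_cast hb
      nlinarith [hX]
end

section
/- For all natural numbers tb and tm with tb + 2·tm ≥ 1, one has (as real numbers) 2·tb + 6·tm + 2·tb·tm/(tb + 2·tm) ≥ 4·√(2·tm·(tb + tm)). -/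
theorem ir_discriminant_key (tb tm : ℕ) (h : tb + 2 * tm ≥ 1) :
    2 * (tb : ℝ) + 6 * tm + 2 * tb * tm / (tb + 2 * tm) ≥
      4 * Real.sqrt (2 * tm * (tb + tm)) := by
  set b := (tb : ℝ) with hbdef
  set m := (tm : ℝ) with hmdef
  have hb : 0 ≤ b := Nat.cast_nonneg tb
  have hm : 0 ≤ m := Nat.cast_nonneg tm
  have hs : (1 : ℝ) ≤ b + 2 * m := by
    rw [hbdef, hmdef]; exact_mod_cast h
  have hs0 : (0 : ℝ) < b + 2 * m := lt_of_lt_of_le one_pos hs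
  have hL : 2 * b + 6 * m + 2 * b * m / (b + 2 * m)
      = (2 * b ^ 2 + 12 * b * m + 12 * m ^ 2) / (b + 2 * m) := by
    field_simp
    ring
  have h4 : Real.sqrt (16 * (2 * m * (b + m)))
      = (4 : ℝ) * Real.sqrt (2 * m * (b + m)) := by
    rw [show (16 : ℝ) * (2 * m * (b + m)) = 4 ^ 2 * (2 * m * (b + m)) by ring]
    rw [Real.sqrt_mul (by positivity : (0:ℝ) ≤ 4 ^ 2),
      Real.sqrt_sq (by norm_num : (0:ℝ) ≤ 4)]
  rw [ge_iff_le, hL, ← h4]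
  apply Real.sqrt_le_iff.mpr
  constructor
  · positivity
  · rw [div_pow, le_div_iff₀ (by positivity)]
    nlinarith [sq_nonneg (b ^ 2 + 2 * b * m + 2 * m ^ 2)]
end
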